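/- (Open-loop bound, geometric decay.) Under the same hypotheses, there exist constants ρ := 1 − λ_min(QP^{-1}) ∈ [0,1) and c := (1−ρ)^{-1}(1−ρ^N)c₁ > 0 such that for every x ∈ ℝ^n, every u ∈ F_W(x), and the associated predicted states x'_i: V(x'_i) ≤ ρ^i V(x) + c · x^Tℰx for all i = 1,…,N. -/

import Mathlib

open Matrix Filter Topology

noncomputable section

/-- The block lower-triangular matrix `Φ ∈ ℝ^{nN×N}` whose (i,j)-th `n×1` block
(0-indexed) is `A^{i-j}B` for `i ≥ j` and `0` otherwise. -/
def Phi (n N : ℕ) (A : Matrix (Fin n) (Fin n) ℝ) (B : Fin n → ℝ) :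
    Matrix (Fin N × Fin n) (Fin N) ℝ :=
  Matrix.of fun p j =>
    if (j : ℕ) ≤ (p.1 : ℕ) then ((A ^ ((p.1 : ℕ) - (j : ℕ))) *ᵥ B) p.2 else 0

/-- `Φ_i ∈ ℝ^{n×N}`, the (i+1)-th row block of `Φ`,
i.e. `Φ_i = [A^i B, A^{i-1} B, …, B, 0, …, 0]`. -/
def PhiBlock (n N : ℕ) (A : Matrix (Fin n) (Fin n) ℝ) (B : Fin n → ℝ) (i : Fin N) :
    Matrix (Fin n) (Fin N) ℝ :=
  Matrix.of fun r j => Phi n N A B (i, r) j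

/-- `Υ := [A; A²; …; A^N] ∈ ℝ^{nN×n}`. -/
def Upsilon (n N : ℕ) (A : Matrix (Fin n) (Fin n) ℝ) :
    Matrix (Fin N × Fin n) (Fin n) ℝ :=
  Matrix.of fun p s => (A ^ ((p.1 : ℕ) + 1)) p.2 s

/-- `Q̄ := blockdiag(Q, …, Q, P)` with `N−1` copies of `Q` followed by `P`. -/
def Qbar (n N : ℕ) (Q P : Matrix (Fin n) (Fin n) ℝ) :
    Matrix (Fin N × Fin n) (Fin N × Fin n) ℝ :=
  Matrix.of fun p q =>
    if p.1 = q.1 then (if (p.1 : ℕ) = N - 1 then P else Q) p.2 q.2 else 0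

/-- The cost `u ↦ ‖Gu − Hx‖₂²`. -/
def Jcost {n N : ℕ} (G : Matrix (Fin N × Fin n) (Fin N) ℝ)
    (H : Matrix (Fin N × Fin n) (Fin n) ℝ) (x : Fin n → ℝ) (u : Fin N → ℝ) : ℝ :=
  (G *ᵥ u - H *ᵥ x) ⬝ᵥ (G *ᵥ u - H *ᵥ x)

/-- The feasible set `F_W(x) := {u ∈ ℝ^N : ‖Gu − Hx‖₂² ≤ xᵀWx}`. -/
def Feas {n N : ℕ} (G : Matrix (Fin N × Fin n) (Fin N) ℝ)
    (H : Matrix (Fin N × Fin n) (Fin n) ℝ) (W : Matrix (Fin n) (Fin n) ℝ)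
    (x : Fin n → ℝ) : Set (Fin N → ℝ) :=
  {u | Jcost G H x u ≤ x ⬝ᵥ (W *ᵥ x)}

/-- The least-squares solution `u*(x) := (GᵀG)⁻¹GᵀHx`. -/
def uStar {n N : ℕ} (G : Matrix (Fin N × Fin n) (Fin N) ℝ)
    (H : Matrix (Fin N × Fin n) (Fin n) ℝ) (x : Fin n → ℝ) : Fin N → ℝ :=
  ((Gᵀ * G)⁻¹ * Gᵀ * H) *ᵥ x

/-- The LQ gain (row vector) `K := −(BᵀPB)⁻¹BᵀPA`. -/
def Kgain {n : ℕ} (A P : Matrix (Fin n) (Fin n) ℝ) (B : Fin n → ℝ) : Fin n → ℝ :=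
  -((B ⬝ᵥ (P *ᵥ B))⁻¹ • Matrix.vecMul B (P * A))

/-- The closed-loop matrix `A + BK`. -/
def Acl {n : ℕ} (A P : Matrix (Fin n) (Fin n) ℝ) (B : Fin n → ℝ) :
    Matrix (Fin n) (Fin n) ℝ :=
  A + Matrix.vecMulVec B (Kgain A P B)

/-- The discrete algebraic Riccati equation
`P = AᵀPA − AᵀPB(BᵀPB)⁻¹BᵀPA + Q`. -/
def Riccati {n : ℕ} (A P Q : Matrix (Fin n) (Fin n) ℝ) (B : Fin n → ℝ) : Prop :=
  P = Aᵀ * P * A -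
      (B ⬝ᵥ (P *ᵥ B))⁻¹ •
        Matrix.vecMulVec (Aᵀ *ᵥ (P *ᵥ B)) (Matrix.vecMul B (P * A)) + Q

/-- The Lyapunov function `V(x) := xᵀPx`. -/
def Vfun {n : ℕ} (P : Matrix (Fin n) (Fin n) ℝ) (x : Fin n → ℝ) : ℝ :=
  x ⬝ᵥ (P *ᵥ x)

/-- `c₁ := max_{i=0,…,N−1} λ_max(Φᵢᵀ P Φᵢ (GᵀG)⁻¹)`. -/
def c1const (n N : ℕ) (A P : Matrix (Fin n) (Fin n) ℝ) (B : Fin n → ℝ)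
    (G : Matrix (Fin N × Fin n) (Fin N) ℝ) : ℝ :=
  ⨆ i : Fin N,
    sSup (spectrum ℝ ((PhiBlock n N A B i)ᵀ * P * PhiBlock n N A B i * (Gᵀ * G)⁻¹))

/-- `ρ := 1 − λ_min(QP⁻¹)`. -/
def rhoConst {n : ℕ} (Q P : Matrix (Fin n) (Fin n) ℝ) : ℝ :=
  1 - sInf (spectrum ℝ (Q * P⁻¹))

/-- `c := (1−ρ)⁻¹(1−ρ^N)c₁`. -/
def cConst (n N : ℕ) (A P Q : Matrix (Fin n) (Fin n) ℝ) (B : Fin n → ℝ)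
    (G : Matrix (Fin N × Fin n) (Fin N) ℝ) : ℝ :=
  (1 - rhoConst Q P)⁻¹ * (1 - rhoConst Q P ^ N) * c1const n N A P B G

/-- `w_i := ε_i − K Σ_{l=0}^{i−1} A^{i−1−l} B ε_l`. -/
def wErr {n N : ℕ} (A P : Matrix (Fin n) (Fin n) ℝ) (B : Fin n → ℝ)
    (ε : Fin N → ℝ) (i : Fin N) : ℝ :=
  ε i - Kgain A P B ⬝ᵥ
    (∑ l ∈ Finset.univ.filter (fun l : Fin N => (l : ℕ) < (i : ℕ)),
      ε l • ((A ^ ((i : ℕ) - 1 - (l : ℕ))) *ᵥ B))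

/-- The controllability matrix `[B, AB, …, A^{n−1}B]`. -/
def Ctrb {n : ℕ} (A : Matrix (Fin n) (Fin n) ℝ) (B : Fin n → ℝ) :
    Matrix (Fin n) (Fin n) ℝ :=
  Matrix.of fun r j => ((A ^ (j : ℕ)) *ᵥ B) r

/-!
Completing the square in the Riccati equation gives, with `r = BᵀPB` and the LQ gain `K`,
`V(Az + aB) = V(z) - zᵀQz + r (a - Kz)²`. Summed along the predicted trajectory this telescopes
to `‖Gu - Hx‖² = xᵀ(P - Q)x + Σₖ r wₖ²` with `wₖ = uₖ - Kx'ₖ`, so `u ∈ F_W(x)` means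
`Σₖ r wₖ² ≤ xᵀℰx`. Each single term is at most `c₁` times that sum: the difference between the
predicted and the closed-loop LQ trajectory is driven from `0` by an input `ε` with the same
deviations `wₖ`, so `r wₖ² ≤ V(d_{k+1}) = εᵀΦₖᵀPΦₖε ≤ c₁ εᵀGᵀGε = c₁ Σⱼ r wⱼ²`. Since
`zᵀQz ≥ λ_min(QP⁻¹) V(z)`, this yields `V(x'_{k+1}) ≤ ρ V(x'_k) + c₁ xᵀℰx`, and the geometric
recursion gives the bound.
-/

theorem Matrix.dotProduct_transpose_mul_self_mulVec {m k : Type*} [Fintype m] [Fintype k]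
    (M : Matrix m k ℝ) (z : k → ℝ) : z ⬝ᵥ ((Mᵀ * M) *ᵥ z) = (M *ᵥ z) ⬝ᵥ (M *ᵥ z) := by
  rw [← mulVec_mulVec, dotProduct_mulVec, vecMul_transpose]

theorem Matrix.dotProduct_transpose_mul_mul_mulVec {m k : Type*} [Fintype m] [Fintype k]
    (M : Matrix m k ℝ) (C : Matrix m m ℝ) (z : k → ℝ) :
    z ⬝ᵥ ((Mᵀ * C * M) *ᵥ z) = (M *ᵥ z) ⬝ᵥ (C *ᵥ (M *ᵥ z)) := by
  rw [← mulVec_mulVec, ← mulVec_mulVec, dotProduct_mulVec, vecMul_transpose]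

theorem Matrix.IsSymm.dotProduct_mulVec_comm {m : Type*} [Fintype m] {M : Matrix m m ℝ}
    (hM : M.IsSymm) (x y : m → ℝ) : x ⬝ᵥ (M *ᵥ y) = y ⬝ᵥ (M *ᵥ x) := by
  rw [dotProduct_mulVec, ← mulVec_transpose, hM.eq, dotProduct_comm]

section LoewnerOrder

open scoped MatrixOrder

theorem Matrix.dotProduct_mulVec_le_of_le {m : Type*} [Fintype m] {A B : Matrix m m ℝ}
    (h : A ≤ B) (z : m → ℝ) : z ⬝ᵥ (A *ᵥ z) ≤ z ⬝ᵥ (B *ᵥ z) := by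
  have := (Matrix.le_iff.mp h).dotProduct_mulVec_nonneg z
  rw [star_trivial, sub_mulVec, dotProduct_sub] at this
  linarith

variable {m : Type*} [Fintype m] [DecidableEq m] {C D : Matrix m m ℝ}

theorem Matrix.conjTranspose_inv_sqrt (D : Matrix m m ℝ) : (CFC.sqrt D)⁻¹ᴴ = (CFC.sqrt D)⁻¹ := by
  rw [conjTranspose_nonsing_inv, ← star_eq_conjTranspose, (CFC.sqrt_nonneg D).isSelfAdjoint]

theorem Matrix.IsHermitian.inv_sqrt_conj (hC : C.IsHermitian) (D : Matrix m m ℝ) :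
    ((CFC.sqrt D)⁻¹ * C * (CFC.sqrt D)⁻¹).IsHermitian := by
  simpa only [conjTranspose_inv_sqrt] using isHermitian_conjTranspose_mul_mul (CFC.sqrt D)⁻¹ hC

namespace Matrix.PosDef

theorem isUnit_det_sqrt (hD : D.PosDef) : IsUnit (CFC.sqrt D).det :=
  (isUnit_iff_isUnit_det _).mp ((CFC.isUnit_sqrt_iff D hD.posSemidef.nonneg).mpr hD.isUnit)

theorem inv_eq_inv_sqrt_mul_inv_sqrt (hD : D.PosDef) : D⁻¹ = (CFC.sqrt D)⁻¹ * (CFC.sqrt D)⁻¹ := by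
  conv_lhs => rw [← CFC.sqrt_mul_sqrt_self D hD.posSemidef.nonneg]
  exact Matrix.mul_inv_rev _ _

theorem sqrt_mul_inv_sqrt_conj (hD : D.PosDef) (X : Matrix m m ℝ) :
    CFC.sqrt D * ((CFC.sqrt D)⁻¹ * X * (CFC.sqrt D)⁻¹) * CFC.sqrt D = X := by
  simp only [Matrix.mul_assoc, nonsing_inv_mul _ hD.isUnit_det_sqrt, Matrix.mul_one,
    mul_nonsing_inv_cancel_left _ _ hD.isUnit_det_sqrt]

theorem spectrum_mul_inv_eq (hD : D.PosDef) (C : Matrix m m ℝ) :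
    spectrum ℝ (C * D⁻¹) = spectrum ℝ ((CFC.sqrt D)⁻¹ * C * (CFC.sqrt D)⁻¹) := by
  obtain ⟨L, hL⟩ := (CFC.isUnit_sqrt_iff D hD.posSemidef.nonneg).mpr hD.isUnit
  rw [← spectrum.units_conjugate' (u := L), Matrix.coe_units_inv, hL,
    hD.inv_eq_inv_sqrt_mul_inv_sqrt]
  simp only [Matrix.mul_assoc, nonsing_inv_mul _ hD.isUnit_det_sqrt, Matrix.mul_one]

theorem sqrt_mul_smul_one_mul_sqrt (hD : D.PosDef) (r : ℝ) :
    CFC.sqrt D * algebraMap ℝ (Matrix m m ℝ) r * CFC.sqrt D = r • D := by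
  rw [Algebra.algebraMap_eq_smul_one, Matrix.mul_smul, Matrix.mul_one, Matrix.smul_mul,
    CFC.sqrt_mul_sqrt_self D hD.posSemidef.nonneg]

theorem le_smul_of_forall_spectrum_mul_inv_le (hD : D.PosDef) (hC : C.IsHermitian) {r : ℝ}
    (h : ∀ x ∈ spectrum ℝ (C * D⁻¹), x ≤ r) : C ≤ r • D := by
  rw [hD.spectrum_mul_inv_eq] at h
  have := star_left_conjugate_le_conjugate
    (le_algebraMap_of_spectrum_le h (hC.inv_sqrt_conj D).isSelfAdjoint) (CFC.sqrt D)
  rwa [(CFC.sqrt_nonneg D).isSelfAdjoint, sqrt_mul_inv_sqrt_conj hD,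
    sqrt_mul_smul_one_mul_sqrt hD] at this

theorem smul_le_of_forall_le_spectrum_mul_inv (hD : D.PosDef) (hC : C.IsHermitian) {r : ℝ}
    (h : ∀ x ∈ spectrum ℝ (C * D⁻¹), r ≤ x) : r • D ≤ C := by
  rw [hD.spectrum_mul_inv_eq] at h
  have := star_left_conjugate_le_conjugate
    (algebraMap_le_of_le_spectrum h (hC.inv_sqrt_conj D).isSelfAdjoint) (CFC.sqrt D)
  rwa [(CFC.sqrt_nonneg D).isSelfAdjoint, sqrt_mul_inv_sqrt_conj hD,
    sqrt_mul_smul_one_mul_sqrt hD] at this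

theorem dotProduct_mulVec_le_sSup_spectrum_mul_inv (hD : D.PosDef) (hC : C.IsHermitian)
    (z : m → ℝ) : z ⬝ᵥ (C *ᵥ z) ≤ sSup (spectrum ℝ (C * D⁻¹)) * (z ⬝ᵥ (D *ᵥ z)) := by
  have := dotProduct_mulVec_le_of_le (hD.le_smul_of_forall_spectrum_mul_inv_le hC
    fun _ hx => le_csSup (Matrix.finite_spectrum _).bddAbove hx) z
  rwa [smul_mulVec, dotProduct_smul, smul_eq_mul] at this

theorem sInf_spectrum_mul_inv_mul_le_dotProduct_mulVec (hD : D.PosDef) (hC : C.IsHermitian)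
    (z : m → ℝ) : sInf (spectrum ℝ (C * D⁻¹)) * (z ⬝ᵥ (D *ᵥ z)) ≤ z ⬝ᵥ (C *ᵥ z) := by
  have := dotProduct_mulVec_le_of_le (hD.smul_le_of_forall_le_spectrum_mul_inv hC
    fun _ hx => csInf_le (Matrix.finite_spectrum _).bddBelow hx) z
  rwa [smul_mulVec, dotProduct_smul, smul_eq_mul] at this

theorem sInf_spectrum_mul_inv_pos [Nonempty m] (hD : D.PosDef) (hC : C.PosDef) :
    0 < sInf (spectrum ℝ (C * D⁻¹)) := by
  have hM : ((CFC.sqrt D)⁻¹ * C * (CFC.sqrt D)⁻¹).PosDef := by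
    simpa only [conjTranspose_inv_sqrt] using hC.conjTranspose_mul_mul_same
      (mulVec_injective_iff_isUnit.mpr
        (isUnit_nonsing_inv_iff.mpr ((isUnit_iff_isUnit_det _).mpr hD.isUnit_det_sqrt)))
  rw [hD.spectrum_mul_inv_eq]
  have hne : (spectrum ℝ ((CFC.sqrt D)⁻¹ * C * (CFC.sqrt D)⁻¹)).Nonempty := by
    rw [hM.isHermitian.spectrum_real_eq_range_eigenvalues]
    exact Set.range_nonempty _
  exact (isStrictlyPositive_iff_posDef.mpr hM).spectrum_pos
    (hne.csInf_mem (Matrix.finite_spectrum _))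

end Matrix.PosDef

end LoewnerOrder

section Trajectory

variable {n N : ℕ} {A : Matrix (Fin n) (Fin n) ℝ} {B : Fin n → ℝ}

def IsTrajectory (A : Matrix (Fin n) (Fin n) ℝ) (B : Fin n → ℝ) (v : Fin N → ℝ)
    (xs : ℕ → Fin n → ℝ) : Prop :=
  ∀ i : Fin N, xs (i + 1) = A *ᵥ xs i + v i • B

theorem exists_isTrajectory (x : Fin n → ℝ) (v : Fin N → ℝ) :
    ∃ xs, xs 0 = x ∧ IsTrajectory A B v xs :=
  ⟨fun k => Nat.rec x (fun k y => A *ᵥ y + (if h : k < N then v ⟨k, h⟩ else 0) • B) k, rfl,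
    fun i => by simp [i.isLt]⟩

theorem IsTrajectory.sub {u v : Fin N → ℝ} {xs ys : ℕ → Fin n → ℝ}
    (hxs : IsTrajectory A B u xs) (hys : IsTrajectory A B v ys) :
    IsTrajectory A B (u - v) (xs - ys) := fun i => by
  simp only [Pi.sub_apply, hxs i, hys i, mulVec_sub, sub_smul]
  abel

theorem isTrajectory_closedLoop (P : Matrix (Fin n) (Fin n) ℝ) (x : Fin n → ℝ) :
    IsTrajectory A B (fun i : Fin N => Kgain A P B ⬝ᵥ (Acl A P B ^ (i : ℕ) *ᵥ x))
      (fun k => Acl A P B ^ k *ᵥ x) := fun i => by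
  simp only [pow_succ', ← mulVec_mulVec, Acl, add_mulVec, vecMulVec_mulVec, op_smul_eq_smul]

theorem IsTrajectory.eq_pow_mulVec_add_sum {v : ℕ → ℝ} {xs : ℕ → Fin n → ℝ}
    (hxs : IsTrajectory A B (fun i : Fin N => v i) xs) :
    ∀ i < N, xs (i + 1) =
      A ^ (i + 1) *ᵥ xs 0 + ∑ j ∈ Finset.range (i + 1), v j • (A ^ (i - j) *ᵥ B)
  | 0, h => by simp [hxs ⟨0, h⟩]
  | i + 1, h => by
    have hsum : A *ᵥ ∑ j ∈ Finset.range (i + 1), v j • (A ^ (i - j) *ᵥ B) =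
        ∑ j ∈ Finset.range (i + 1), v j • (A ^ (i + 1 - j) *ᵥ B) := by
      rw [mulVec_sum]
      refine Finset.sum_congr rfl fun j hj => ?_
      rw [mulVec_smul, mulVec_mulVec, ← pow_succ',
        Nat.sub_add_comm (Nat.lt_succ_iff.mp (Finset.mem_range.mp hj))]
    rw [hxs ⟨i + 1, h⟩, IsTrajectory.eq_pow_mulVec_add_sum hxs i (by omega), mulVec_add,
      mulVec_mulVec, ← pow_succ', hsum, Finset.sum_range_succ _ (i + 1)]
    simp [add_assoc]

theorem IsTrajectory.phi_mulVec_add_upsilon_mulVec {v : Fin N → ℝ} {xs : ℕ → Fin n → ℝ}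
    (hxs : IsTrajectory A B v xs) (i : Fin N) :
    (fun r => (Phi n N A B *ᵥ v + Upsilon n N A *ᵥ xs 0) (i, r)) = xs (i + 1) := by
  set v' : ℕ → ℝ := fun j => if h : j < N then v ⟨j, h⟩ else 0
  have hv : ∀ j : Fin N, v j = v' j := fun j => by simp [v', j.isLt]
  have hxs' : IsTrajectory A B (fun j : Fin N => v' j) xs := fun j => by rw [hxs j, hv j]
  rw [hxs'.eq_pow_mulVec_add_sum i i.isLt]
  ext r
  have hphi : (Phi n N A B *ᵥ v) (i, r) =
      ∑ j ∈ Finset.range N, if j ≤ i then v' j * (A ^ (i - j) *ᵥ B) r else 0 := by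
    rw [← Fin.sum_univ_eq_sum_range (fun j => if j ≤ i then v' j * (A ^ (i - j) *ᵥ B) r else 0)]
    simp only [mulVec, dotProduct, Phi, of_apply, hv, ite_mul, zero_mul, mul_comm]
  rw [Pi.add_apply, hphi, ← Finset.sum_subset (Finset.range_subset_range.mpr i.isLt)
    fun j _ hj => if_neg (by simpa [Nat.lt_succ_iff] using hj)]
  rw [Finset.sum_congr rfl fun j hj => if_pos (Nat.lt_succ_iff.mp (Finset.mem_range.mp hj))]
  simp [Upsilon, mulVec, dotProduct, Finset.sum_apply, add_comm]

theorem IsTrajectory.phiBlock_mulVec {v : Fin N → ℝ} {xs : ℕ → Fin n → ℝ}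
    (hxs : IsTrajectory A B v xs) (hxs0 : xs 0 = 0) (i : Fin N) :
    PhiBlock n N A B i *ᵥ v = xs (i + 1) := by
  rw [← hxs.phi_mulVec_add_upsilon_mulVec i, hxs0, mulVec_zero, add_zero]
  rfl

end Trajectory

theorem dotProduct_Qbar_mulVec {n N : ℕ} (Q P : Matrix (Fin n) (Fin n) ℝ)
    (z : Fin N × Fin n → ℝ) :
    z ⬝ᵥ (Qbar n N Q P *ᵥ z) = ∑ i : Fin N,
      (fun r => z (i, r)) ⬝ᵥ ((if (i : ℕ) = N - 1 then P else Q) *ᵥ fun r => z (i, r)) := by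
  simp [dotProduct, mulVec, Qbar, Fintype.sum_prod_type, ite_mul, Finset.sum_ite_eq]

theorem Kgain_dotProduct {n : ℕ} (A P : Matrix (Fin n) (Fin n) ℝ) (B z : Fin n → ℝ) :
    Kgain A P B ⬝ᵥ z = -((B ⬝ᵥ (P *ᵥ B))⁻¹ * (B ⬝ᵥ (P *ᵥ (A *ᵥ z)))) := by
  rw [Kgain, neg_dotProduct, smul_dotProduct, ← dotProduct_mulVec, ← mulVec_mulVec, smul_eq_mul]

section Constants

variable {n N : ℕ} {A Q P : Matrix (Fin n) (Fin n) ℝ} {B : Fin n → ℝ}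

theorem rhoConst_lt_one [Nonempty (Fin n)] (hQ : Q.PosDef) (hP : P.PosDef) :
    rhoConst Q P < 1 := by
  have := hP.sInf_spectrum_mul_inv_pos hQ
  rw [rhoConst]
  linarith

theorem sub_le_rhoConst_mul_vfun (hQ : Q.IsHermitian) (hP : P.PosDef) (z : Fin n → ℝ) :
    Vfun P z - z ⬝ᵥ (Q *ᵥ z) ≤ rhoConst Q P * Vfun P z := by
  have := hP.sInf_spectrum_mul_inv_mul_le_dotProduct_mulVec hQ z
  rw [rhoConst, Vfun]
  linarith

theorem rhoConst_nonneg [Nonempty (Fin n)] (hQ : Q.IsHermitian) (hP : P.PosDef)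
    (hQP : ∀ z, z ⬝ᵥ (Q *ᵥ z) ≤ Vfun P z) : 0 ≤ rhoConst Q P := by
  set z : Fin n → ℝ := fun _ => 1
  have hz := hP.dotProduct_mulVec_pos
    (Function.ne_iff.mpr ⟨Classical.arbitrary _, one_ne_zero⟩ : z ≠ 0)
  rw [star_trivial, ← Vfun] at hz
  nlinarith [hQP z, sub_le_rhoConst_mul_vfun hQ hP z]

theorem sSup_spectrum_le_c1const {G : Matrix (Fin N × Fin n) (Fin N) ℝ} (i : Fin N) :
    sSup (spectrum ℝ ((PhiBlock n N A B i)ᵀ * P * PhiBlock n N A B i * (Gᵀ * G)⁻¹)) ≤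
      c1const n N A P B G :=
  le_ciSup (f := fun i => sSup (spectrum ℝ
    ((PhiBlock n N A B i)ᵀ * P * PhiBlock n N A B i * (Gᵀ * G)⁻¹))) (Set.finite_range _).bddAbove i

theorem isHermitian_transpose_phiBlock_mul_mul (hP : P.IsHermitian) (i : Fin N) :
    ((PhiBlock n N A B i)ᵀ * P * PhiBlock n N A B i).IsHermitian := by
  simpa only [conjTranspose_eq_transpose_of_trivial] using
    isHermitian_conjTranspose_mul_mul (PhiBlock n N A B i) hP

theorem c1const_pos {G : Matrix (Fin N × Fin n) (Fin N) ℝ} (hP : P.PosDef) (hB : B ≠ 0)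
    (hN : 1 ≤ N) (hG : (Gᵀ * G).PosDef) : 0 < c1const n N A P B G := by
  set i₀ : Fin N := ⟨0, hN⟩
  set e₀ : Fin N → ℝ := Pi.single i₀ 1
  have he₀ : e₀ ≠ 0 := Pi.single_ne_zero_iff.mpr one_ne_zero
  have hΦ : PhiBlock n N A B i₀ *ᵥ e₀ = B := by
    ext r
    simp [e₀, i₀, PhiBlock, Phi, mulVec_single]
  have hnum : 0 < e₀ ⬝ᵥ (((PhiBlock n N A B i₀)ᵀ * P * PhiBlock n N A B i₀) *ᵥ e₀) := by
    rw [dotProduct_transpose_mul_mul_mulVec, hΦ]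
    simpa using hP.dotProduct_mulVec_pos hB
  have hden : 0 < e₀ ⬝ᵥ ((Gᵀ * G) *ᵥ e₀) := by simpa using hG.dotProduct_mulVec_pos he₀
  have hle := hG.dotProduct_mulVec_le_sSup_spectrum_mul_inv
    (isHermitian_transpose_phiBlock_mul_mul (A := A) (B := B) hP.isHermitian i₀) e₀
  exact (pos_of_mul_pos_left (hnum.trans_le hle) hden.le).trans_le (sSup_spectrum_le_c1const i₀)

end Constants

namespace Riccati

variable {n N : ℕ} {A P Q : Matrix (Fin n) (Fin n) ℝ} {B : Fin n → ℝ}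

theorem vfun_step (hRic : Riccati A P Q B) (hP : P.IsHermitian) (hR : B ⬝ᵥ (P *ᵥ B) ≠ 0)
    (z : Fin n → ℝ) (a : ℝ) :
    Vfun P (A *ᵥ z + a • B) =
      Vfun P z - z ⬝ᵥ (Q *ᵥ z) + B ⬝ᵥ (P *ᵥ B) * (a - Kgain A P B ⬝ᵥ z) ^ 2 := by
  have hPs : P.IsSymm := isHermitian_iff_isSymm.mp hP
  have hz : Vfun P z = Vfun P (A *ᵥ z) - (B ⬝ᵥ (P *ᵥ B))⁻¹ * (B ⬝ᵥ (P *ᵥ (A *ᵥ z))) ^ 2 +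
      z ⬝ᵥ (Q *ᵥ z) := by
    conv_lhs => rw [Vfun, hRic]
    rw [add_mulVec, sub_mulVec, smul_mulVec, vecMulVec_mulVec, op_smul_eq_smul, dotProduct_add,
      dotProduct_sub, dotProduct_smul, dotProduct_smul, dotProduct_transpose_mul_mul_mulVec,
      ← dotProduct_mulVec, ← mulVec_mulVec, dotProduct_mulVec z, vecMul_transpose,
      hPs.dotProduct_mulVec_comm (A *ᵥ z) B, Vfun, smul_eq_mul, smul_eq_mul]
    ring
  rw [Kgain_dotProduct, hz]
  simp only [Vfun, mulVec_add, mulVec_smul, dotProduct_add, add_dotProduct, dotProduct_smul,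
    smul_dotProduct, smul_eq_mul, hPs.dotProduct_mulVec_comm (A *ᵥ z) B]
  field_simp
  ring

theorem dotProduct_mulVec_le_vfun (hRic : Riccati A P Q B) (hP : P.PosSemidef)
    (hR : B ⬝ᵥ (P *ᵥ B) ≠ 0) (z : Fin n → ℝ) : z ⬝ᵥ (Q *ᵥ z) ≤ Vfun P z := by
  have h0 := hP.dotProduct_mulVec_nonneg (A *ᵥ z + (Kgain A P B ⬝ᵥ z) • B)
  rw [star_trivial, ← Vfun, hRic.vfun_step hP.isHermitian hR, sub_self] at h0
  linarith

theorem sum_stageCost_eq (hRic : Riccati A P Q B) (hP : P.IsHermitian)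
    (hR : B ⬝ᵥ (P *ᵥ B) ≠ 0) (hN : 1 ≤ N) {v : Fin N → ℝ} {xs : ℕ → Fin n → ℝ}
    (hxs : IsTrajectory A B v xs) :
    ∑ i : Fin N, xs (i + 1) ⬝ᵥ ((if (i : ℕ) = N - 1 then P else Q) *ᵥ xs (i + 1)) =
      Vfun P (xs 0) - xs 0 ⬝ᵥ (Q *ᵥ xs 0) +
        ∑ k : Fin N, B ⬝ᵥ (P *ᵥ B) * (v k - Kgain A P B ⬝ᵥ xs k) ^ 2 := by
  obtain ⟨M, rfl⟩ : ∃ M, N = M + 1 := ⟨N - 1, by omega⟩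
  have htel : Vfun P (xs (M + 1)) - Vfun P (xs 0) = ∑ k : Fin (M + 1),
      (B ⬝ᵥ (P *ᵥ B) * (v k - Kgain A P B ⬝ᵥ xs k) ^ 2 - xs k ⬝ᵥ (Q *ᵥ xs k)) := by
    rw [← Finset.sum_range_sub (fun k => Vfun P (xs k)),
      ← Fin.sum_univ_eq_sum_range (fun k => Vfun P (xs (k + 1)) - Vfun P (xs k))]
    refine Finset.sum_congr rfl fun k _ => ?_
    rw [hxs k, hRic.vfun_step hP hR]
    ring
  have hstage : ∑ k : Fin (M + 1), xs k ⬝ᵥ (Q *ᵥ xs k) =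
      xs 0 ⬝ᵥ (Q *ᵥ xs 0) + ∑ i : Fin M, xs (i + 1) ⬝ᵥ (Q *ᵥ xs (i + 1)) :=
    Fin.sum_univ_succ _
  have hQ : ∀ i : Fin M, (if (i : ℕ) = M then P else Q) = Q := fun i => if_neg i.isLt.ne
  rw [Fin.sum_univ_castSucc]
  simp only [Fin.val_castSucc, Fin.val_last, add_tsub_cancel_right, hQ, ↓reduceIte]
  rw [Finset.sum_sub_distrib] at htel
  simp only [Vfun] at htel ⊢
  linarith

theorem jcost_eq (hRic : Riccati A P Q B) (hP : P.IsHermitian) (hR : B ⬝ᵥ (P *ᵥ B) ≠ 0)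
    (hN : 1 ≤ N) {S : Matrix (Fin N × Fin n) (Fin N × Fin n) ℝ}
    {G : Matrix (Fin N × Fin n) (Fin N) ℝ} {H : Matrix (Fin N × Fin n) (Fin n) ℝ}
    (hS : S.IsSymm) (hSsq : S * S = Qbar n N Q P) (hG : G = S * Phi n N A B)
    (hH : H = -(S * Upsilon n N A)) {v : Fin N → ℝ} {xs : ℕ → Fin n → ℝ}
    (hxs : IsTrajectory A B v xs) :
    Jcost G H (xs 0) v = Vfun P (xs 0) - xs 0 ⬝ᵥ (Q *ᵥ xs 0) +
      ∑ k : Fin N, B ⬝ᵥ (P *ᵥ B) * (v k - Kgain A P B ⬝ᵥ xs k) ^ 2 := by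
  have hGH : G *ᵥ v - H *ᵥ xs 0 = S *ᵥ (Phi n N A B *ᵥ v + Upsilon n N A *ᵥ xs 0) := by
    rw [hG, hH, neg_mulVec, sub_neg_eq_add, ← mulVec_mulVec, ← mulVec_mulVec, ← mulVec_add]
  rw [Jcost, hGH, ← dotProduct_transpose_mul_self_mulVec, hS.eq, hSsq, dotProduct_Qbar_mulVec]
  simp only [hxs.phi_mulVec_add_upsilon_mulVec]
  exact hRic.sum_stageCost_eq hP hR hN hxs

/-- `‖Gε‖²` is the sum of the weighted squared deviations of the trajectory from `0`, so
`Gε = 0` forces the input to follow the LQ feedback, which keeps the state, and hence `ε`,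
at `0`. -/
theorem posDef_transpose_mul_self (hRic : Riccati A P Q B) (hP : P.PosDef) (hB : B ≠ 0)
    (hN : 1 ≤ N) {S : Matrix (Fin N × Fin n) (Fin N × Fin n) ℝ}
    {G : Matrix (Fin N × Fin n) (Fin N) ℝ} (hS : S.IsSymm) (hSsq : S * S = Qbar n N Q P)
    (hG : G = S * Phi n N A B) : (Gᵀ * G).PosDef := by
  have hR : 0 < B ⬝ᵥ (P *ᵥ B) := by simpa using hP.dotProduct_mulVec_pos hB
  suffices h : ∀ ε, G *ᵥ ε = 0 → ε = 0 by
    rw [← conjTranspose_eq_transpose_of_trivial]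
    refine PosDef.conjTranspose_mul_self G fun ε₁ ε₂ hε => sub_eq_zero.mp (h _ ?_)
    rw [mulVec_sub, hε, sub_self]
  intro ε hε
  obtain ⟨d, hd0, hd⟩ := exists_isTrajectory (A := A) (B := B) 0 ε
  have hJ := hRic.jcost_eq hP.isHermitian hR.ne' hN hS hSsq hG rfl hd
  rw [Jcost, hε, hd0, Vfun] at hJ
  simp only [mulVec_zero, sub_zero, dotProduct_zero, zero_add] at hJ
  have hfeedback : ∀ k, ε k = Kgain A P B ⬝ᵥ d k := fun k => by
    have := (Finset.sum_eq_zero_iff_of_nonneg fun j _ => by positivity).mp hJ.symm k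
      (Finset.mem_univ _)
    rw [mul_eq_zero, pow_eq_zero_iff two_ne_zero, sub_eq_zero] at this
    exact this.resolve_left hR.ne'
  have hd_zero : ∀ k ≤ N, d k = 0 := by
    intro k
    induction k with
    | zero => exact fun _ => hd0
    | succ k ih =>
      intro hk
      have := hd ⟨k, hk⟩
      simp only at this
      rw [this, hfeedback, ih (by omega), mulVec_zero, dotProduct_zero, zero_smul, add_zero]
  funext k
  rw [hfeedback k, hd_zero k k.isLt.le, dotProduct_zero, Pi.zero_apply]

theorem sq_deviation_le_c1const_mul_sum (hRic : Riccati A P Q B) (hP : P.PosDef) (hB : B ≠ 0)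
    (hN : 1 ≤ N) {S : Matrix (Fin N × Fin n) (Fin N × Fin n) ℝ}
    {G : Matrix (Fin N × Fin n) (Fin N) ℝ} (hS : S.IsSymm) (hSsq : S * S = Qbar n N Q P)
    (hG : G = S * Phi n N A B) {u : Fin N → ℝ} {xs : ℕ → Fin n → ℝ}
    (hxs : IsTrajectory A B u xs) (k : Fin N) :
    B ⬝ᵥ (P *ᵥ B) * (u k - Kgain A P B ⬝ᵥ xs k) ^ 2 ≤
      c1const n N A P B G * ∑ j : Fin N, B ⬝ᵥ (P *ᵥ B) * (u j - Kgain A P B ⬝ᵥ xs j) ^ 2 := by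
  have hR : 0 < B ⬝ᵥ (P *ᵥ B) := by simpa using hP.dotProduct_mulVec_pos hB
  set xstar : ℕ → Fin n → ℝ := fun k => Acl A P B ^ k *ᵥ xs 0
  set ε : Fin N → ℝ := u - fun i : Fin N => Kgain A P B ⬝ᵥ xstar i
  have hd : IsTrajectory A B ε (xs - xstar) := hxs.sub (isTrajectory_closedLoop P (xs 0))
  have hd0 : (xs - xstar) 0 = 0 := by simp [xstar]
  have hw : ∀ j : Fin N, ε j - Kgain A P B ⬝ᵥ (xs - xstar) j = u j - Kgain A P B ⬝ᵥ xs j :=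
    fun j => by simp only [ε, Pi.sub_apply, dotProduct_sub]; ring
  have hgram : ε ⬝ᵥ ((Gᵀ * G) *ᵥ ε) =
      ∑ j : Fin N, B ⬝ᵥ (P *ᵥ B) * (u j - Kgain A P B ⬝ᵥ xs j) ^ 2 := by
    have hJ := hRic.jcost_eq hP.isHermitian hR.ne' hN hS hSsq hG rfl hd
    rw [Jcost, hd0, Vfun] at hJ
    simp only [mulVec_zero, sub_zero, dotProduct_zero, zero_add, hw] at hJ
    rw [dotProduct_transpose_mul_self_mulVec, hJ]
  calc B ⬝ᵥ (P *ᵥ B) * (u k - Kgain A P B ⬝ᵥ xs k) ^ 2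
      ≤ Vfun P ((xs - xstar) (k + 1)) := by
        rw [hd k, hRic.vfun_step hP.isHermitian hR.ne', hw]
        linarith [hRic.dotProduct_mulVec_le_vfun hP.posSemidef hR.ne' ((xs - xstar) k)]
    _ = ε ⬝ᵥ (((PhiBlock n N A B k)ᵀ * P * PhiBlock n N A B k) *ᵥ ε) := by
        rw [dotProduct_transpose_mul_mul_mulVec, hd.phiBlock_mulVec hd0, Vfun]
    _ ≤ sSup (spectrum ℝ ((PhiBlock n N A B k)ᵀ * P * PhiBlock n N A B k * (Gᵀ * G)⁻¹)) *
          ε ⬝ᵥ ((Gᵀ * G) *ᵥ ε) :=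
        PosDef.dotProduct_mulVec_le_sSup_spectrum_mul_inv
          (hRic.posDef_transpose_mul_self hP hB hN hS hSsq hG)
          (isHermitian_transpose_phiBlock_mul_mul hP.isHermitian k) ε
    _ ≤ c1const n N A P B G * ∑ j : Fin N, B ⬝ᵥ (P *ᵥ B) * (u j - Kgain A P B ⬝ᵥ xs j) ^ 2 := by
        rw [hgram]
        exact mul_le_mul_of_nonneg_right (sSup_spectrum_le_c1const k)
          (Finset.sum_nonneg fun j _ => by positivity)

end Riccati

theorem le_pow_mul_add_geom_sum_mul {a : ℕ → ℝ} {ρ b : ℝ} {N : ℕ} (hρ : 0 ≤ ρ)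
    (h : ∀ k < N, a (k + 1) ≤ ρ * a k + b) :
    ∀ i ≤ N, a i ≤ ρ ^ i * a 0 + (∑ j ∈ Finset.range i, ρ ^ j) * b := by
  intro i
  induction i with
  | zero => simp
  | succ i ih =>
    intro hi
    have := mul_le_mul_of_nonneg_left (ih (by omega)) hρ
    rw [geom_sum_succ]
    linarith [h i hi, show ρ * (ρ ^ i * a 0 + (∑ j ∈ Finset.range i, ρ ^ j) * b) + b =
      ρ ^ (i + 1) * a 0 + (ρ * ∑ j ∈ Finset.range i, ρ ^ j + 1) * b by ring]

theorem geom_sum_le_inv_one_sub_mul {ρ : ℝ} {i N : ℕ} (hρ0 : 0 ≤ ρ) (hρ1 : ρ < 1)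
    (hi : i ≤ N) : ∑ j ∈ Finset.range i, ρ ^ j ≤ (1 - ρ)⁻¹ * (1 - ρ ^ N) := by
  calc ∑ j ∈ Finset.range i, ρ ^ j ≤ ∑ j ∈ Finset.range N, ρ ^ j :=
        Finset.sum_le_sum_of_subset_of_nonneg (Finset.range_subset_range.mpr hi)
          fun j _ _ => pow_nonneg hρ0 j
    _ = (1 - ρ)⁻¹ * (1 - ρ ^ N) := by
        rw [geom_sum_eq hρ1.ne, inv_mul_eq_div, ← neg_div_neg_eq, neg_sub, neg_sub]

theorem open_loop_bound_geometric_general {n N : ℕ} (hN : 1 ≤ N)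
    (A : Matrix (Fin n) (Fin n) ℝ) (B : Fin n → ℝ) (hB : B ≠ 0)
    (Q P : Matrix (Fin n) (Fin n) ℝ) (hQ : Q.PosDef) (hP : P.PosDef)
    (hRic : Riccati A P Q B)
    (S : Matrix (Fin N × Fin n) (Fin N × Fin n) ℝ)
    (hS : S.PosSemidef) (hSsq : S * S = Qbar n N Q P)
    (G : Matrix (Fin N × Fin n) (Fin N) ℝ) (hG : G = S * Phi n N A B)
    (H : Matrix (Fin N × Fin n) (Fin n) ℝ) (hH : H = -(S * Upsilon n N A))
    (W : Matrix (Fin n) (Fin n) ℝ)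
    (x : Fin n → ℝ) (u : Fin N → ℝ) (hu : u ∈ Feas G H W x)
    (xs : ℕ → Fin n → ℝ) (hx0 : xs 0 = x)
    (hstep : ∀ i : Fin N, xs ((i : ℕ) + 1) = A *ᵥ xs i + u i • B) :
    0 ≤ rhoConst Q P ∧ rhoConst Q P < 1 ∧ 0 < cConst n N A P Q B G ∧
      ∀ i : ℕ, 1 ≤ i → i ≤ N →
        Vfun P (xs i) ≤ rhoConst Q P ^ i * Vfun P x +
          cConst n N A P Q B G * (x ⬝ᵥ ((W - (P - Q)) *ᵥ x)) := by
  obtain ⟨r, -⟩ := Function.ne_iff.mp hB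
  have : Nonempty (Fin n) := ⟨r⟩
  have hR : 0 < B ⬝ᵥ (P *ᵥ B) := by simpa using hP.dotProduct_mulVec_pos hB
  have hS' : S.IsSymm := isHermitian_iff_isSymm.mp hS.isHermitian
  have hρ0 :=
    rhoConst_nonneg hQ.isHermitian hP (hRic.dotProduct_mulVec_le_vfun hP.posSemidef hR.ne')
  have hρ1 := rhoConst_lt_one hQ hP
  have hc1 := c1const_pos (A := A) hP hB hN (hRic.posDef_transpose_mul_self hP hB hN hS' hSsq hG)
  set E := x ⬝ᵥ ((W - (P - Q)) *ᵥ x)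
  have hsum : ∑ k : Fin N, B ⬝ᵥ (P *ᵥ B) * (u k - Kgain A P B ⬝ᵥ xs k) ^ 2 ≤ E := by
    have hJ := hRic.jcost_eq hP.isHermitian hR.ne' hN hS' hSsq hG hH hstep
    have hfeas : Jcost G H x u ≤ x ⬝ᵥ (W *ᵥ x) := hu
    rw [hx0] at hJ
    simp only [E, Vfun, sub_mulVec, dotProduct_sub] at hJ ⊢
    linarith
  have hE : 0 ≤ E := (Finset.sum_nonneg fun k _ => by positivity).trans hsum
  have hdecay : ∀ k < N, Vfun P (xs (k + 1)) ≤
      rhoConst Q P * Vfun P (xs k) + c1const n N A P B G * E := fun k hk => by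
    have hdev := hRic.sq_deviation_le_c1const_mul_sum hP hB hN hS' hSsq hG hstep ⟨k, hk⟩
    have := hstep ⟨k, hk⟩
    simp only at this hdev
    rw [this, hRic.vfun_step hP.isHermitian hR.ne']
    nlinarith [sub_le_rhoConst_mul_vfun hQ.isHermitian hP (xs k)]
  have hρN : rhoConst Q P ^ N < 1 := pow_lt_one₀ hρ0 hρ1 (by omega)
  refine ⟨hρ0, hρ1, by rw [cConst]; positivity, fun i _ hi => ?_⟩
  have hgeom := mul_le_mul_of_nonneg_right (geom_sum_le_inv_one_sub_mul hρ0 hρ1 hi)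
    (mul_nonneg hc1.le hE)
  have := le_pow_mul_add_geom_sum_mul (a := fun k => Vfun P (xs k)) hρ0 hdecay i hi
  rw [hx0] at this
  rw [cConst, mul_assoc]
  linarith

/-- Open-loop bound, geometric decay: Under the same hypotheses,
`ρ := 1 − λ_min(QP⁻¹) ∈ [0,1)` and `c := (1−ρ)⁻¹(1−ρ^N)c₁ > 0` satisfy, for
every `x`, every `u ∈ F_W(x)` and the associated predicted states:
`V(x'_i) ≤ ρ^i V(x) + c · xᵀℰx` for all `i = 1,…,N`. -/
theorem open_loop_bound_geometric {n N : ℕ} (hN : 1 ≤ N)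
    (A : Matrix (Fin n) (Fin n) ℝ) (B : Fin n → ℝ) (hB : B ≠ 0)
    (Q P : Matrix (Fin n) (Fin n) ℝ) (hQ : Q.PosDef) (hP : P.PosDef)
    (hRic : Riccati A P Q B)
    (S : Matrix (Fin N × Fin n) (Fin N × Fin n) ℝ)
    (hS : S.PosSemidef) (hSsq : S * S = Qbar n N Q P)
    (G : Matrix (Fin N × Fin n) (Fin N) ℝ) (hG : G = S * Phi n N A B)
    (H : Matrix (Fin N × Fin n) (Fin n) ℝ) (hH : H = -(S * Upsilon n N A))
    (W : Matrix (Fin n) (Fin n) ℝ) (hW : (W - (P - Q)).PosDef)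
    (x : Fin n → ℝ) (u : Fin N → ℝ) (hu : u ∈ Feas G H W x)
    (xs : ℕ → Fin n → ℝ) (hx0 : xs 0 = x)
    (hstep : ∀ i : Fin N, xs ((i : ℕ) + 1) = A *ᵥ xs i + u i • B) :
    0 ≤ rhoConst Q P ∧ rhoConst Q P < 1 ∧ 0 < cConst n N A P Q B G ∧
      ∀ i : ℕ, 1 ≤ i → i ≤ N →
        Vfun P (xs i) ≤ rhoConst Q P ^ i * Vfun P x +
          cConst n N A P Q B G * (x ⬝ᵥ ((W - (P - Q)) *ᵥ x)) :=
  open_loop_bound_geometric_general hN A B hB Q P hQ hP hRic S hS hSsq G hG H hH W x u hu xs hx0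
    hstep
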